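/- arXiv:2505.23263 — 5 statements merged into one kernel-verified Lean document; each statement's English description precedes it below -/
import Mathlib

section
/- Let I be an ideal on ω. Then the set V(I) := {x ∈ ℓ∞ : f(x) = g(x) for all f, g ∈ SL(I)} coincides with the space of bounded I-convergent sequences c(I) ∩ ℓ∞. -/
open Filter Topology
open scoped Classical

noncomputable section

abbrev LInf : Type := lp (fun _ : ℕ => ℝ) (⊤ : ENNReal)

def indic (A : Set ℕ) : LInf :=
  ⟨A.indicator (fun _ => (1:ℝ)), memℓp_infty ⟨1, by
    rintro r ⟨n, rfl⟩
    by_cases h : n ∈ A <;> simp [Set.indicator, h]⟩⟩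

def IsIdealOmega (I : Set (Set ℕ)) : Prop :=
  (∀ A B : Set ℕ, A ∈ I → B ⊆ A → B ∈ I) ∧
  (∀ A B : Set ℕ, A ∈ I → B ∈ I → A ∪ B ∈ I) ∧
  (Set.univ : Set ℕ) ∉ I ∧
  (∀ A : Set ℕ, A.Finite → A ∈ I)

def SLI (I : Set (Set ℕ)) : Set (LInf →L[ℝ] ℝ) :=
  {f | (∀ x : LInf, (∀ n, 0 ≤ x n) → 0 ≤ f x) ∧
       (∀ (x : LInf) (a : ℝ), Tendsto (fun n => x n) atTop (𝓝 a) → f x = a) ∧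
       (∀ A ∈ I, f (indic A) = 0)}

def UltI (I : Set (Set ℕ)) : Set (Ultrafilter ℕ) :=
  {F | (↑F : Filter ℕ) ≤ cofinite ∧ ∀ A ∈ I, Aᶜ ∈ F}

def IClusterPoint (I : Set (Set ℕ)) (x : ℕ → ℝ) (η : ℝ) : Prop :=
  ∀ ε > 0, {n | |x n - η| ≤ ε} ∉ I

def IConv (I : Set (Set ℕ)) (x : ℕ → ℝ) (η : ℝ) : Prop :=
  ∀ ε > 0, {n | ε ≤ |x n - η|} ∈ I

def eone : LInf := indic Set.univ

lemma indic_apply (A : Set ℕ) (n : ℕ) :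
    indic A n = if n ∈ A then (1:ℝ) else 0 := by
  change A.indicator (fun _ => (1:ℝ)) n = _
  by_cases h : n ∈ A <;> simp [h]

def eone' : LInf := indic Set.univ

lemma eone'_apply (n : ℕ) : eone' n = 1 := by simp [eone', indic_apply]

lemma norm_apply_le (z : LInf) (n : ℕ) : |z n| ≤ ‖z‖ := by
  have h := lp.norm_apply_le_norm (ENNReal.top_ne_zero) z n
  rwa [Real.norm_eq_abs] at h

def mulIndic (A : Set ℕ) (z : LInf) : LInf :=
  ⟨fun n => if n ∈ A then z n else 0, memℓp_infty ⟨‖z‖, by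
    rintro r ⟨n, rfl⟩
    by_cases h : n ∈ A
    · simp only [if_pos h, Real.norm_eq_abs]; exact norm_apply_le z n
    · simp only [if_neg h, norm_zero]; exact norm_nonneg _⟩⟩

lemma mulIndic_apply (A : Set ℕ) (z : LInf) (n : ℕ) :
    mulIndic A z n = if n ∈ A then z n else 0 := rfl

lemma mulIndic_add_compl (A : Set ℕ) (z : LInf) :
    mulIndic A z + mulIndic Aᶜ z = z := by
  ext n
  rw [lp.coeFn_add, Pi.add_apply]
  by_cases h : n ∈ A <;> simp [mulIndic_apply, h]

lemma SLI_eone {I : Set (Set ℕ)} {f : LInf →L[ℝ] ℝ} (hf : f ∈ SLI I) : f eone' = 1 := by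
  refine hf.2.1 eone' 1 ?_
  have : (fun n => eone' n) = fun _ : ℕ => (1:ℝ) := funext fun n => eone'_apply n
  rw [this]; exact tendsto_const_nhds

lemma SLI_abs_le {I : Set (Set ℕ)} {f : LInf →L[ℝ] ℝ} (hf : f ∈ SLI I)
    (z : LInf) (c : ℝ) (h : ∀ n, |z n| ≤ c) : |f z| ≤ c := by
  have key : ∀ w : LInf, (∀ n, |w n| ≤ c) → f w ≤ c := by
    intro w hw
    have h0 : 0 ≤ f (c • eone' - w) := by
      refine hf.1 _ fun n => ?_
      have : (c • eone' - w) n = c - w n := by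
        rw [lp.coeFn_sub, Pi.sub_apply, lp.coeFn_smul, Pi.smul_apply, eone'_apply]
        simp
      rw [this]
      have := abs_le.1 (hw n)
      linarith [this.2]
    rw [map_sub, map_smul, SLI_eone hf] at h0
    simp at h0
    linarith
  have h1 := key z h
  have h2 := key (-z) (by intro n; rw [lp.coeFn_neg, Pi.neg_apply, abs_neg]; exact h n)
  rw [map_neg] at h2
  rw [abs_le]; constructor <;> linarith

lemma SLI_mulIndic_eq_zero {I : Set (Set ℕ)} {f : LInf →L[ℝ] ℝ} (hf : f ∈ SLI I)
    {A : Set ℕ} (hA : A ∈ I) (z : LInf) : f (mulIndic A z) = 0 := by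
  have key : ∀ w : LInf, (∀ n, |w n| ≤ ‖z‖) → f (mulIndic A w) ≤ 0 := by
    intro w hw
    have h0 : 0 ≤ f (‖z‖ • indic A - mulIndic A w) := by
      refine hf.1 _ fun n => ?_
      have : (‖z‖ • indic A - mulIndic A w) n
          = ‖z‖ * (indic A n) - mulIndic A w n := by
        rw [lp.coeFn_sub, Pi.sub_apply, lp.coeFn_smul, Pi.smul_apply]; rfl
      rw [this, indic_apply, mulIndic_apply]
      by_cases h : n ∈ A
      · simp only [if_pos h, mul_one]
        have := abs_le.1 (hw n)
        linarith [this.2]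
      · simp only [if_neg h, mul_zero, sub_zero, le_refl]
    rw [map_sub, map_smul, hf.2.2 A hA, smul_zero, zero_sub] at h0
    linarith
  have h1 := key z fun n => norm_apply_le z n
  have h2 := key (-z) (by intro n; rw [lp.coeFn_neg, Pi.neg_apply, abs_neg]; exact norm_apply_le z n)
  have hneg : mulIndic A (-z) = -(mulIndic A z) := by
    ext n
    rw [lp.coeFn_neg, Pi.neg_apply, mulIndic_apply, mulIndic_apply, lp.coeFn_neg, Pi.neg_apply]
    by_cases h : n ∈ A <;> simp [h]
  rw [hneg, map_neg] at h2
  linarith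

lemma SLI_eq_of_IConv {I : Set (Set ℕ)} {f : LInf →L[ℝ] ℝ} (hf : f ∈ SLI I)
    {x : LInf} {η : ℝ} (hx : IConv I (fun n => x n) η) : f x = η := by
  have key : ∀ ε > 0, |f x - η| ≤ ε := by
    intro ε hε
    set A : Set ℕ := {n | ε ≤ |x n - η|} with hAdef
    have hA : A ∈ I := hx ε hε
    set w : LInf := x - η • eone' with hw
    have hwn : ∀ n, w n = x n - η := by
      intro n
      rw [hw, lp.coeFn_sub, Pi.sub_apply, lp.coeFn_smul, Pi.smul_apply, eone'_apply]
      simp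
    have hfw : f w = f x - η := by
      rw [hw, map_sub, map_smul, SLI_eone hf]; simp
    have hdecomp : f w = f (mulIndic A w) + f (mulIndic Aᶜ w) := by
      rw [← map_add, mulIndic_add_compl]
    have hz : f (mulIndic A w) = 0 := SLI_mulIndic_eq_zero hf hA w
    have hbound : |f (mulIndic Aᶜ w)| ≤ ε := by
      refine SLI_abs_le hf _ ε fun n => ?_
      rw [mulIndic_apply]
      by_cases h : n ∈ Aᶜ
      · rw [if_pos h, hwn]
        have : ¬ ε ≤ |x n - η| := h
        linarith [not_le.1 this]
      · rw [if_neg h, abs_zero]; exact le_of_lt hε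
    rw [← hfw, hdecomp, hz, zero_add]
    exact hbound
  by_contra hne
  have hpos : 0 < |f x - η| / 2 := by
    have : f x - η ≠ 0 := sub_ne_zero.2 hne
    positivity
  have := key _ hpos
  have h2 : 0 < |f x - η| := abs_pos.2 (sub_ne_zero.2 hne)
  linarith

lemma exists_ulim (F : Ultrafilter ℕ) (z : LInf) :
    ∃ a : ℝ, Tendsto (fun n => z n) (↑F) (𝓝 a) := by
  have hmem : Metric.closedBall (0:ℝ) ‖z‖ ∈ Ultrafilter.map (fun n => z n) F := by
    refine Filter.mem_map.2 ?_
    have : ∀ n : ℕ, z n ∈ Metric.closedBall (0:ℝ) ‖z‖ := by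
      intro n
      rw [Metric.mem_closedBall, Real.dist_eq, sub_zero]
      exact norm_apply_le z n
    exact Filter.univ_mem' this
  obtain ⟨a, _, ha⟩ := (isCompact_closedBall (0:ℝ) ‖z‖).ultrafilter_le_nhds
    (Ultrafilter.map (fun n => z n) F) (le_principal_iff.2 hmem)
  exact ⟨a, ha⟩

def ulim (F : Ultrafilter ℕ) (z : LInf) : ℝ := (exists_ulim F z).choose

lemma tendsto_ulim (F : Ultrafilter ℕ) (z : LInf) :
    Tendsto (fun n => z n) (↑F) (𝓝 (ulim F z)) := (exists_ulim F z).choose_spec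

def ulimCLM (F : Ultrafilter ℕ) : LInf →L[ℝ] ℝ :=
  LinearMap.mkContinuous
    { toFun := ulim F
      map_add' := by
        intro x y
        refine tendsto_nhds_unique (tendsto_ulim F (x + y)) ?_
        have h := (tendsto_ulim F x).add (tendsto_ulim F y)
        refine h.congr fun n => ?_
        rw [lp.coeFn_add, Pi.add_apply]
      map_smul' := by
        intro c x
        refine tendsto_nhds_unique (tendsto_ulim F (c • x)) ?_
        have h := (tendsto_ulim F x).const_mul c
        simp only [RingHom.id_apply, smul_eq_mul]
        refine h.congr fun n => ?_
        rw [lp.coeFn_smul, Pi.smul_apply, smul_eq_mul] }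
    1
    (by
      intro z
      simp only [LinearMap.coe_mk, AddHom.coe_mk, one_mul, Real.norm_eq_abs]
      have h : Tendsto (fun n => |z n|) (↑F) (𝓝 |ulim F z|) :=
        (tendsto_ulim F z).abs
      exact le_of_tendsto h (Filter.Eventually.of_forall fun n => norm_apply_le z n))

lemma ulimCLM_apply (F : Ultrafilter ℕ) (z : LInf) : ulimCLM F z = ulim F z := rfl

lemma ulimCLM_mem_SLI {I : Set (Set ℕ)} {F : Ultrafilter ℕ} (hF : F ∈ UltI I) :
    ulimCLM F ∈ SLI I := by
  refine ⟨?_, ?_, ?_⟩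
  · intro x hx
    exact ge_of_tendsto (tendsto_ulim F x) (Filter.Eventually.of_forall hx)
  · intro x a hx
    refine tendsto_nhds_unique (tendsto_ulim F x) (hx.mono_left ?_)
    rw [← Nat.cofinite_eq_atTop]
    exact hF.1
  · intro A hA
    refine tendsto_nhds_unique (tendsto_ulim F (indic A)) ?_
    have hev : ∀ᶠ n in (↑F : Filter ℕ), indic A n = 0 := by
      filter_upwards [hF.2 A hA] with n hn
      rw [indic_apply, if_neg hn]
    exact Tendsto.congr' (Filter.EventuallyEq.symm hev) tendsto_const_nhds

def dualF (I : Set (Set ℕ)) (hI : IsIdealOmega I) : Filter ℕ where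
  sets := {S | Sᶜ ∈ I}
  univ_sets := by
    have : (Set.univ : Set ℕ)ᶜ = ∅ := Set.compl_univ
    simp only [Set.mem_setOf_eq, this]
    exact hI.2.2.2 ∅ Set.finite_empty
  sets_of_superset := by
    intro S T hS hsub
    exact hI.1 _ _ hS (Set.compl_subset_compl.2 hsub)
  inter_sets := by
    intro S T hS hT
    simp only [Set.mem_setOf_eq, Set.compl_inter]
    exact hI.2.1 _ _ hS hT

lemma mem_dualF {I : Set (Set ℕ)} {hI : IsIdealOmega I} {S : Set ℕ} :
    S ∈ dualF I hI ↔ Sᶜ ∈ I := Iff.rfl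

lemma exists_ult {I : Set (Set ℕ)} (hI : IsIdealOmega I) {A : Set ℕ} (hA : A ∉ I) :
    ∃ F : Ultrafilter ℕ, F ∈ UltI I ∧ A ∈ F := by
  have hne : NeBot (dualF I hI ⊓ 𝓟 A) := by
    rw [inf_principal_neBot_iff]
    intro U hU
    by_contra hem
    rw [Set.not_nonempty_iff_eq_empty] at hem
    have hsub : A ⊆ Uᶜ := by
      intro n hn
      intro hnU
      exact Set.eq_empty_iff_forall_notMem.1 hem n ⟨hnU, hn⟩
    exact hA (hI.1 _ _ (mem_dualF.1 hU) hsub)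
  refine ⟨Ultrafilter.of (dualF I hI ⊓ 𝓟 A), ⟨?_, ?_⟩, ?_⟩
  · intro S hS
    have : Sᶜ ∈ I := hI.2.2.2 _ hS
    exact (Ultrafilter.of_le _).trans inf_le_left (mem_dualF.2 this)
  · intro B hB
    have : Bᶜ ∈ dualF I hI := mem_dualF.2 (by rwa [compl_compl])
    exact (Ultrafilter.of_le _).trans inf_le_left this
  · exact (Ultrafilter.of_le _).trans inf_le_right (mem_principal_self A)


theorem stmt15 (I : Set (Set ℕ)) (hI : IsIdealOmega I) :
    {x : LInf | ∀ f ∈ SLI I, ∀ g ∈ SLI I, f x = g x} =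
      {x : LInf | ∃ η : ℝ, IConv I (fun n => x n) η} := by
  ext x
  simp only [Set.mem_setOf_eq]
  constructor
  · intro hx
    obtain ⟨F₀, hF₀, -⟩ := exists_ult hI (A := Set.univ) hI.2.2.1
    set η := ulimCLM F₀ x with hη
    refine ⟨η, ?_⟩
    intro ε hε
    by_contra hA
    obtain ⟨F, hF, hAF⟩ := exists_ult hI hA
    have heq : ulimCLM F x = η :=
      hx _ (ulimCLM_mem_SLI hF) _ (ulimCLM_mem_SLI hF₀)
    have htend : Tendsto (fun n => |x n - η|) (↑F) (𝓝 0) := by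
      have := (tendsto_ulim F x).sub_const η
      rw [← ulimCLM_apply, heq, sub_self] at this
      exact this.abs.congr (fun n => rfl) |>.mono_right (by rw [abs_zero])
    have : ε ≤ 0 := ge_of_tendsto htend (by
      filter_upwards [hAF] with n hn
      exact hn)
    linarith
  · rintro ⟨η, hη⟩ f hf g hg
    rw [SLI_eq_of_IConv hf hη, SLI_eq_of_IConv hg hη]
end
end

section
/- Let I be an ideal on ω. Then the closure in ℓ∞ of the space of bounded I*-convergent sequences equals the space of bounded I-convergent sequences: cl(c(I*) ∩ ℓ∞) = c(I) ∩ ℓ∞. -/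
open Filter Topology
set_option synthInstance.maxHeartbeats 1000000
set_option maxHeartbeats 1000000

noncomputable section

lemma apply_le_dist (u v : LInf) (n : ℕ) : |u n - v n| ≤ dist u v := by
  have h := lp.norm_apply_le_norm (ENNReal.top_ne_zero) (u - v) n
  simpa [lp.coeFn_sub, Real.norm_eq_abs, dist_eq_norm] using h

lemma iconv_dist (I : Set (Set ℕ)) (hI : IsIdealOmega I) {u v : LInf} {α β : ℝ}
    (hu : IConv I (fun n => u n) α) (hv : IConv I (fun n => v n) β) :
    |α - β| ≤ dist u v := by
  by_contra h
  push_neg at h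
  set ε := (|α - β| - dist u v) / 2 with hε
  have hεpos : 0 < ε := by simp only [hε]; linarith
  have hAB := hI.2.1 _ _ (hu ε hεpos) (hv ε hεpos)
  have hne : ({n | ε ≤ |u n - α|} ∪ {n | ε ≤ |v n - β|}) ≠ Set.univ := by
    intro hcon
    exact hI.2.2.1 (hcon ▸ hAB)
  obtain ⟨n, hn⟩ : ∃ n, n ∉ ({n | ε ≤ |u n - α|} ∪ {n | ε ≤ |v n - β|}) := by
    by_contra hc
    push_neg at hc
    exact hne (Set.eq_univ_of_forall hc)
  simp only [Set.mem_union, Set.mem_setOf_eq, not_or, not_le] at hn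
  have h1 : |α - β| ≤ |α - u n| + |u n - v n| + |v n - β| := by
    have := abs_sub_le α (u n) β
    have := abs_sub_le (u n) (v n) β
    nlinarith [abs_sub_le α (u n) β, abs_sub_le (u n) (v n) β]
  have h2 := apply_le_dist u v n
  rw [abs_sub_comm α (u n)] at h1
  nlinarith [hn.1, hn.2]

theorem stmt16 (I : Set (Set ℕ)) (hI : IsIdealOmega I) :
    closure {x : LInf | ∃ η : ℝ, ∃ A ∈ I,
        Tendsto (fun n => x n) (atTop ⊓ Filter.principal Aᶜ) (𝓝 η)} =
      {x : LInf | ∃ η : ℝ, IConv I (fun n => x n) η} := by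
  have hsub : {x : LInf | ∃ η : ℝ, ∃ A ∈ I,
      Tendsto (fun n => x n) (atTop ⊓ Filter.principal Aᶜ) (𝓝 η)} ⊆
      {x : LInf | ∃ η : ℝ, IConv I (fun n => x n) η} := by
    rintro x ⟨η, A, hA, hx⟩
    refine ⟨η, fun ε hε => ?_⟩
    have h := Metric.tendsto_nhds.mp hx ε hε
    rw [Filter.eventually_inf_principal, Filter.eventually_atTop] at h
    obtain ⟨N, hN⟩ := h
    refine hI.1 (A ∪ {n | n < N}) _ (hI.2.1 _ _ hA (hI.2.2.2 _ (Set.finite_lt_nat N))) ?_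
    intro n hn
    simp only [Set.mem_setOf_eq] at hn
    by_contra hc
    simp only [Set.mem_union, Set.mem_setOf_eq, not_or, not_lt] at hc
    have := hN n hc.2 hc.1
    rw [Real.dist_eq] at this
    linarith
  have hclosed : IsClosed {x : LInf | ∃ η : ℝ, IConv I (fun n => x n) η} := by
    refine IsSeqClosed.isClosed ?_
    intro xs x hxs hlim
    choose η hη using hxs
    have hcauchy : CauchySeq η := by
      rw [Metric.cauchySeq_iff']
      intro ε hε
      obtain ⟨N, hN⟩ := Metric.cauchySeq_iff'.mp hlim.cauchySeq ε hε
      exact ⟨N, fun n hn => lt_of_le_of_lt (by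
        simpa [Real.dist_eq] using iconv_dist I hI (hη n) (hη N)) (hN n hn)⟩
    obtain ⟨a, ha⟩ := cauchySeq_tendsto_of_complete hcauchy
    refine ⟨a, fun ε hε => ?_⟩
    obtain ⟨k, hk1, hk2⟩ : ∃ k, dist (xs k) x < ε/4 ∧ |η k - a| < ε/4 := by
      have h1 := Metric.tendsto_nhds.mp hlim (ε/4) (by linarith)
      have h2 := Metric.tendsto_nhds.mp ha (ε/4) (by linarith)
      obtain ⟨k, hk, hk'⟩ := (h1.and h2).exists
      exact ⟨k, hk, by simpa [Real.dist_eq] using hk'⟩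
    refine hI.1 {n | ε/2 ≤ |xs k n - η k|} _ (hη k (ε/2) (by linarith)) ?_
    intro n hn
    simp only [Set.mem_setOf_eq] at hn ⊢
    by_contra hc
    push_neg at hc
    have h3 := apply_le_dist (xs k) x n
    have h4 : |x n - a| ≤ |x n - xs k n| + |xs k n - η k| + |η k - a| := by
      nlinarith [abs_sub_le (x n) (xs k n) a, abs_sub_le (xs k n) (η k) a]
    rw [abs_sub_comm (x n) (xs k n)] at h4
    linarith
  refine subset_antisymm ?_ ?_
  · rw [← hclosed.closure_eq]
    exact closure_mono hsub
  · rintro x ⟨η, hx⟩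
    rw [Metric.mem_closure_iff]
    intro ε hε
    set A := {n | ε/2 ≤ |x n - η|} with hA
    have hAI : A ∈ I := hx (ε/2) (by linarith)
    have hmem : Memℓp (fun n => if n ∈ A then x n else η) (⊤ : ENNReal) := by
      apply memℓp_infty
      refine ⟨max ‖x‖ |η|, ?_⟩
      rintro r ⟨n, rfl⟩
      by_cases h : n ∈ A
      · simp only [h, if_pos]
        exact le_max_of_le_left (lp.norm_apply_le_norm ENNReal.top_ne_zero x n)
      · simp only [h, if_neg, not_false_iff]
        exact le_max_of_le_right (le_refl _)
    refine ⟨⟨_, hmem⟩, ⟨η, A, hAI, ?_⟩, ?_⟩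
    · refine Tendsto.congr' ?_ tendsto_const_nhds
      rw [Filter.EventuallyEq, Filter.eventually_inf_principal]
      filter_upwards with n hn
      simp only [Set.mem_compl_iff] at hn
      exact (if_neg hn).symm
    · rw [dist_eq_norm]
      have : ‖x - ⟨_, hmem⟩‖ ≤ ε/2 := by
        apply lp.norm_le_of_forall_le (by linarith)
        intro n
        rw [lp.coeFn_sub]
        simp only [Pi.sub_apply, Real.norm_eq_abs]
        by_cases h : n ∈ A
        · rw [if_pos h]; simp; linarith
        · rw [if_neg h]
          have : ¬ (ε/2 ≤ |x n - η|) := h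
          push_neg at this
          linarith [le_of_lt this]
      linarith
end
end

section
/- Let I be a P-ideal on ω. Then c(I) ∩ ℓ∞ = c + (c₀₀(I) ∩ ℓ∞), i.e., every bounded I-convergent sequence is the sum of a convergent sequence and a bounded sequence supported on a set in I. -/
open Filter Topology

noncomputable section

set_option synthInstance.maxHeartbeats 1000000 in
set_option maxHeartbeats 2000000 in
theorem stmt17 (I : Set (Set ℕ)) (hI : IsIdealOmega I)
    (hP : ∀ A : ℕ → Set ℕ, (∀ n, A n ∈ I) → ∃ B ∈ I, ∀ n, (A n \ B).Finite) :
    {x : LInf | ∃ η : ℝ, IConv I (fun n => x n) η} =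
      {x : LInf | ∃ y z : LInf, (∃ a : ℝ, Tendsto (fun n => y n) atTop (𝓝 a)) ∧
        {n | z n ≠ 0} ∈ I ∧ x = y + z} := by
  classical
  obtain ⟨hdown, hunion, -, hfin⟩ := hI
  ext x
  simp only [Set.mem_setOf_eq]
  constructor
  · rintro ⟨η, hx⟩
    -- P-ideal direction
    set A : ℕ → Set ℕ := fun k => {n | (1:ℝ)/(k+1) ≤ |x n - η|} with hA
    have hAI : ∀ k, A k ∈ I := fun k => hx _ (by positivity)
    obtain ⟨B, hBI, hBfin⟩ := hP A hAI
    have hzmem : Memℓp (fun n => if n ∈ B then x n - η else 0) ⊤ := by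
      apply memℓp_infty ⟨‖x‖ + |η|, ?_⟩
      rintro r ⟨n, rfl⟩
      by_cases h : n ∈ B <;> simp only [h, if_pos, if_neg, not_false_iff]
      · calc ‖x n - η‖ ≤ ‖x n‖ + ‖η‖ := norm_sub_le _ _
          _ ≤ ‖x‖ + |η| :=
            add_le_add (lp.norm_apply_le_norm (by norm_num : (⊤:ENNReal) ≠ 0) x n)
              (le_of_eq (Real.norm_eq_abs η))
      · simp only [norm_zero]
        positivity
    set z : LInf := ⟨fun n => if n ∈ B then x n - η else 0, hzmem⟩ with hz
    refine ⟨x - z, z, ⟨η, ?_⟩, ?_, (by abel : x = x - z + z)⟩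
    · have hval : ∀ n, (x - z) n = if n ∈ B then η else x n := by
        intro n
        have : (x - z) n = x n - z n := lp.coeFn_sub x z ▸ rfl
        rw [this]
        by_cases h : n ∈ B <;> simp [hz, h]
      rw [Metric.tendsto_atTop]
      intro ε hε
      obtain ⟨k, hk⟩ := exists_nat_one_div_lt hε
      have hFfin := hBfin k
      obtain ⟨m, hm⟩ := hFfin.bddAbove
      refine ⟨m + 1, fun n hn => ?_⟩
      rw [Real.dist_eq, hval n]
      by_cases h : n ∈ B
      · simpa [h] using hε
      · simp only [h, if_neg, not_false_iff]
        by_cases hAk : n ∈ A k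
        · exact absurd (hm ⟨hAk, h⟩) (by omega)
        · have : ¬ ((1:ℝ)/(k+1) ≤ |x n - η|) := hAk
          push_neg at this
          calc |x n - η| < 1/(k+1) := this
            _ < ε := by simpa using hk
    · refine hdown B _ hBI ?_
      intro n hn
      by_contra h
      exact hn (by simp [hz, h])
  · rintro ⟨y, z, ⟨a, hy⟩, hzI, rfl⟩
    refine ⟨a, fun ε hε => ?_⟩
    have hsub : {n | ε ≤ |(y + z) n - a|} ⊆ {n | z n ≠ 0} ∪ {n | ε ≤ |y n - a|} := by
      intro n hn
      by_cases h : z n = 0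
      · right
        have : (y + z) n = y n + z n := lp.coeFn_add y z ▸ rfl
        simpa [this, h] using hn
      · exact Or.inl h
    refine hdown _ _ (hunion _ _ hzI (hfin _ ?_)) hsub
    have := (Metric.tendsto_atTop.1 hy) ε hε
    obtain ⟨N, hN⟩ := this
    apply Set.Finite.subset (Set.finite_Iio N)
    intro n hn
    by_contra h
    simp only [Set.mem_Iio, not_lt] at h
    have := hN n h
    rw [Real.dist_eq] at this
    exact absurd hn (not_le.2 this)
end
end

section
/- Let I be an ideal on ω. For every x ∈ ℓ∞, the distance in sup norm from x to the space of bounded I-convergent sequences equals (I-limsup x − I-liminf x)/2. -/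
open Filter Topology

set_option maxHeartbeats 800000

noncomputable section

lemma ideal_biUnion {I : Set (Set ℕ)} (hI : IsIdealOmega I) {ι : Type*} (t : Finset ι)
    (f : ι → Set ℕ) (hf : ∀ i ∈ t, f i ∈ I) : (⋃ i ∈ t, f i) ∈ I := by
  classical
  induction t using Finset.induction with
  | empty => simpa using hI.2.2.2 ∅ Set.finite_empty
  | insert _ _ h ih =>
    rw [Finset.set_biUnion_insert]
    exact hI.2.1 _ _ (hf _ (Finset.mem_insert_self _ _))
      (ih fun i hi => hf i (Finset.mem_insert_of_mem hi))

lemma exists_cluster {I : Set (Set ℕ)} (hI : IsIdealOmega I) (x : ℕ → ℝ) {S : Set ℕ}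
    (hS : S ∉ I) {a b : ℝ} (hx : ∀ n ∈ S, x n ∈ Set.Icc a b) :
    ∃ η ∈ Set.Icc a b, IClusterPoint I x η := by
  by_contra hcon
  push_neg at hcon
  have h1 : ∀ η ∈ Set.Icc a b, ∃ ε > 0, {n | |x n - η| ≤ ε} ∈ I := by
    intro η hη
    have := hcon η hη
    unfold IClusterPoint at this
    push_neg at this
    obtain ⟨ε, hε, h⟩ := this
    exact ⟨ε, hε, h⟩
  choose! ε hε hmem using h1
  have hcov : Set.Icc a b ⊆ ⋃ η ∈ Set.Icc a b, Metric.ball η (ε η) := fun η hη =>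
    Set.mem_biUnion hη (by simpa using hε η hη)
  obtain ⟨t, htsub, htfin, htcov⟩ := (isCompact_Icc (a := a) (b := b)).elim_finite_subcover_image
    (fun η _ => Metric.isOpen_ball) hcov
  apply hS
  apply hI.1 (⋃ η ∈ htfin.toFinset, {n | |x n - η| ≤ ε η}) S
  · exact ideal_biUnion hI _ _ (fun η hη => hmem η (htsub (htfin.mem_toFinset.mp hη)))
  · intro n hn
    have := htcov (hx n hn)
    simp only [Set.mem_iUnion] at this
    obtain ⟨η, hηt, hb⟩ := this
    rw [Metric.mem_ball, Real.dist_eq] at hb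
    exact Set.mem_biUnion (htfin.mem_toFinset.mpr hηt) (le_of_lt hb)

lemma cluster_abs_le {I : Set (Set ℕ)} (hI : IsIdealOmega I) {x : ℕ → ℝ} {M η : ℝ}
    (hM : ∀ n, |x n| ≤ M) (hη : IClusterPoint I x η) : |η| ≤ M := by
  refine le_of_forall_pos_le_add (fun ε hε => ?_)
  have h := hη ε hε
  have hne : {n | |x n - η| ≤ ε}.Nonempty := by
    rcases Set.eq_empty_or_nonempty {n | |x n - η| ≤ ε} with he | hne
    · exact absurd (he ▸ hI.2.2.2 ∅ Set.finite_empty) h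
    · exact hne
  obtain ⟨n, hn⟩ := hne
  have h1 : |η| ≤ |x n| + |x n - η| := by
    have h2 := abs_sub_abs_le_abs_sub η (x n)
    have h3 := abs_sub_comm η (x n)
    nlinarith [abs_nonneg (x n - η), abs_nonneg (x n), le_abs_self η, neg_abs_le η]
  exact le_trans h1 (add_le_add (hM n) hn)

theorem stmt18 (I : Set (Set ℕ)) (hI : IsIdealOmega I) (x : LInf) :
    Metric.infDist x {y : LInf | ∃ η : ℝ, IConv I (fun n => y n) η} =
      (sSup {η : ℝ | IClusterPoint I (fun n => x n) η} -
        sInf {η : ℝ | IClusterPoint I (fun n => x n) η}) / 2 := by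
  classical
  set Γ : Set ℝ := {η : ℝ | IClusterPoint I (fun n => x n) η} with hΓ
  set T : Set LInf := {y : LInf | ∃ η : ℝ, IConv I (fun n => y n) η} with hT
  set M : ℝ := ‖x‖ with hMdef
  have hM : ∀ n, |x n| ≤ M := fun n => by
    have h := lp.norm_apply_le_norm ENNReal.top_ne_zero x n
    rwa [Real.norm_eq_abs] at h
  have hΓsub : Γ ⊆ Set.Icc (-M) M := fun η hη =>
    abs_le.mp (cluster_abs_le hI hM hη)
  have hΓne : Γ.Nonempty := by
    obtain ⟨η, _, hc⟩ := exists_cluster hI (fun n => x n) hI.2.2.1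
      (fun n _ => Set.mem_Icc.mpr (abs_le.mp (hM n)))
    exact ⟨η, hc⟩
  have hbdd : BddAbove Γ := ⟨M, fun η hη => (hΓsub hη).2⟩
  have hbddb : BddBelow Γ := ⟨-M, fun η hη => (hΓsub hη).1⟩
  set β : ℝ := sSup Γ with hβ
  set α : ℝ := sInf Γ with hα
  have hαβ : α ≤ β := csInf_le_csSup hΓne hbddb hbdd
  have hβc : IClusterPoint I (fun n => x n) β := by
    intro ε hε
    obtain ⟨η, hηΓ, hlt⟩ := exists_lt_of_lt_csSup hΓne (by linarith : β - ε/2 < β)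
    have hηle : η ≤ β := le_csSup hbdd hηΓ
    intro hmem
    refine hηΓ (ε/2) (by linarith) (hI.1 _ _ hmem ?_)
    intro n hn
    simp only [Set.mem_setOf_eq] at hn ⊢
    have h2 : |η - β| ≤ ε/2 := by rw [abs_le]; constructor <;> linarith
    calc |x n - β| ≤ |x n - η| + |η - β| := by
          have := abs_sub_le (x n) η β; linarith
      _ ≤ ε/2 + ε/2 := add_le_add hn h2
      _ = ε := by ring
  have hαc : IClusterPoint I (fun n => x n) α := by
    intro ε hε
    obtain ⟨η, hηΓ, hlt⟩ := exists_lt_of_csInf_lt hΓne (by linarith : α < α + ε/2)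
    have hηge : α ≤ η := csInf_le hbddb hηΓ
    intro hmem
    refine hηΓ (ε/2) (by linarith) (hI.1 _ _ hmem ?_)
    intro n hn
    simp only [Set.mem_setOf_eq] at hn ⊢
    have h2 : |η - α| ≤ ε/2 := by rw [abs_le]; constructor <;> linarith
    calc |x n - α| ≤ |x n - η| + |η - α| := by
          have := abs_sub_le (x n) η α; linarith
      _ ≤ ε/2 + ε/2 := add_le_add hn h2
      _ = ε := by ring
  have htailU : ∀ ε > 0, {n | β + ε ≤ x n} ∈ I := by
    intro ε hε
    by_contra hS
    obtain ⟨η, hηI, hηc⟩ := exists_cluster hI (fun n => x n) hS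
      (fun n hn => ⟨hn, le_trans (le_abs_self _) (hM n)⟩)
    have : η ≤ β := le_csSup hbdd hηc
    linarith [hηI.1]
  have htailL : ∀ ε > 0, {n | x n ≤ α - ε} ∈ I := by
    intro ε hε
    by_contra hS
    obtain ⟨η, hηI, hηc⟩ := exists_cluster hI (fun n => x n) hS
      (fun n hn => ⟨neg_le_of_abs_le (hM n), hn⟩)
    have : α ≤ η := csInf_le hbddb hηc
    linarith [hηI.2]
  have hTne : T.Nonempty := by
    refine ⟨0, 0, fun ε hε => ?_⟩
    have he : {n : ℕ | ε ≤ |(0 : LInf) n - 0|} = ∅ := by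
      ext n
      simp only [Set.mem_setOf_eq, Set.mem_empty_iff_false, iff_false, not_le, sub_zero]
      have h0 : ((0 : LInf) : ℕ → ℝ) n = 0 := by rw [lp.coeFn_zero]; rfl
      rw [h0, abs_zero]; exact hε
    rw [he]; exact hI.2.2.2 ∅ Set.finite_empty
  refine le_antisymm ?_ ?_
  · refine le_of_forall_pos_le_add (fun ε hε => ?_)
    set m : ℝ := (α + β) / 2 with hm
    set r : ℝ := (β - α) / 2 with hr
    have hr0 : 0 ≤ r := by rw [hr]; linarith
    set yf : ℕ → ℝ := fun n => if |x n - m| ≤ r + ε then m else x n with hyf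
    have hymem : Memℓp yf ⊤ := memℓp_infty ⟨max |m| M, by
      rintro t ⟨n, rfl⟩
      by_cases h : |x n - m| ≤ r + ε <;>
        simp only [hyf, h, if_true, if_false, Real.norm_eq_abs]
      · exact le_max_left _ _
      · exact le_trans (hM n) (le_max_right _ _)⟩
    set y : LInf := ⟨yf, hymem⟩ with hy
    have hyT : y ∈ T := by
      refine ⟨m, fun δ hδ => ?_⟩
      refine hI.1 ({n | β + ε ≤ x n} ∪ {n | x n ≤ α - ε})
        _ (hI.2.1 _ _ (htailU ε hε) (htailL ε hε)) ?_
      intro n hn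
      simp only [Set.mem_setOf_eq] at hn
      have hn' : δ ≤ |yf n - m| := hn
      by_cases h : |x n - m| ≤ r + ε
      · exfalso
        rw [show yf n = m from if_pos h, sub_self, abs_zero] at hn'
        linarith
      · rw [not_le] at h
        rcases lt_abs.mp h with h' | h'
        · left; simp only [Set.mem_setOf_eq]
          have hmr : m + r = β := by rw [hm, hr]; ring
          linarith
        · right; simp only [Set.mem_setOf_eq]
          have hmr : m - r = α := by rw [hm, hr]; ring
          linarith
    have hdist : dist x y ≤ r + ε := by
      rw [dist_eq_norm]
      refine lp.norm_le_of_forall_le (by linarith) (fun n => ?_)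
      have hsub : (x - y : LInf) n = x n - yf n := by
        have h0 : ⇑(x - y : LInf) = ⇑x - ⇑y := lp.coeFn_sub x y
        rw [h0]; rfl
      rw [hsub, Real.norm_eq_abs]
      by_cases h : |x n - m| ≤ r + ε
      · rw [show yf n = m from if_pos h]; exact h
      · rw [show yf n = x n from if_neg h, sub_self, abs_zero]; linarith
    exact le_trans (Metric.infDist_le_dist_of_mem hyT) hdist
  · rw [Metric.infDist_eq_iInf]
    haveI := hTne.to_subtype
    refine le_ciInf ?_
    rintro ⟨y, η, hyconv⟩
    show (β - α) / 2 ≤ dist x y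
    rw [dist_eq_norm]
    have key : ∀ c : ℝ, IClusterPoint I (fun n => x n) c → |c - η| ≤ ‖x - y‖ := by
      intro c hc
      refine le_of_forall_pos_le_add (fun δ hδ => ?_)
      have hA : {n | |x n - c| ≤ δ/2} ∉ I := hc (δ/2) (by linarith)
      have hC : {n | δ/2 ≤ |y n - η|} ∈ I := hyconv (δ/2) (by linarith)
      have hnsub : ¬ ({n | |x n - c| ≤ δ/2} ⊆ {n | δ/2 ≤ |y n - η|}) :=
        fun hsub => hA (hI.1 _ _ hC hsub)
      rw [Set.not_subset] at hnsub
      obtain ⟨n, hnA, hnC⟩ := hnsub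
      simp only [Set.mem_setOf_eq, not_le] at hnA hnC
      have hxy : |x n - y n| ≤ ‖x - y‖ := by
        have hsub : (x - y : LInf) n = x n - y n := by
          have h0 : ⇑(x - y : LInf) = ⇑x - ⇑y := lp.coeFn_sub x y
          rw [h0]; rfl
        have h1 := lp.norm_apply_le_norm ENNReal.top_ne_zero (x - y) n
        rwa [hsub, Real.norm_eq_abs] at h1
      have h1 : |c - η| ≤ |c - x n| + |x n - y n| + |y n - η| := by
        have t1 := abs_sub_le c (x n) η
        have t2 := abs_sub_le (x n) (y n) η
        linarith
      have h2 : |c - x n| ≤ δ/2 := by rwa [abs_sub_comm]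
      linarith
    have k1 := key β hβc
    have k2 := key α hαc
    have h3 : β - α ≤ |β - η| + |α - η| := by
      have t1 := le_abs_self (β - η)
      have t2 := neg_abs_le (α - η)
      linarith
    linarith
end
end

section
/- Let I be an F_σ ideal on ω (closed under the identification with a subset of Cantor space, I is a countable union of closed sets). Then for every bounded real sequence x, every I-cluster point of x is an I-limit point of x; hence the sets of I-limit points and I-cluster points coincide. -/
open Filter Topology

noncomputable section

def ILimitPoint (I : Set (Set ℕ)) (x : ℕ → ℝ) (η : ℝ) : Prop :=
  ∃ a : ℕ → ℕ, StrictMono a ∧ Set.range a ∉ I ∧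
    Tendsto (fun n => x (a n)) atTop (𝓝 η)

open Classical in
/-- characteristic function of a set of naturals -/
noncomputable def chi (A : Set ℕ) : ℕ → Bool := fun n => decide (n ∈ A)

lemma chi_supp (A : Set ℕ) : {n | chi A n = true} = A := by
  ext n; simp [chi]

lemma chi_mono {A B : Set ℕ} (h : A ⊆ B) : ∀ k, chi A k = true → chi B k = true := by
  intro k hk
  simp only [chi, decide_eq_true_eq] at hk ⊢
  exact h hk

/-- downward (and finite-union over indices) closure of closed sets -/
def Cl (C : ℕ → Set (ℕ → Bool)) (n : ℕ) : Set (ℕ → Bool) :=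
  {f | ∃ g ∈ ⋃ j ≤ n, C j, ∀ k, f k = true → g k = true}

lemma Cl_mono (C : ℕ → Set (ℕ → Bool)) {m n : ℕ} (h : m ≤ n) : Cl C m ⊆ Cl C n := by
  rintro f ⟨g, hg, hfg⟩
  refine ⟨g, ?_, hfg⟩
  simp only [Set.mem_iUnion] at hg ⊢
  obtain ⟨j, hj, hgj⟩ := hg
  exact ⟨j, hj.trans h, hgj⟩

lemma mem_Cl_self (C : ℕ → Set (ℕ → Bool)) {n j : ℕ} (h : j ≤ n) {f : ℕ → Bool}
    (hf : f ∈ C j) : f ∈ Cl C n := by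
  refine ⟨f, ?_, fun _ h => h⟩
  simp only [Set.mem_iUnion]
  exact ⟨j, h, hf⟩

lemma Cl_hered (C : ℕ → Set (ℕ → Bool)) {n : ℕ} {A B : Set ℕ} (h : A ⊆ B)
    (hB : chi B ∈ Cl C n) : chi A ∈ Cl C n := by
  obtain ⟨g, hg, hfg⟩ := hB
  exact ⟨g, hg, fun k hk => hfg k (chi_mono h k hk)⟩

lemma Cl_isClosed (C : ℕ → Set (ℕ → Bool)) (hC : ∀ n, IsClosed (C n)) (n : ℕ) :
    IsClosed (Cl C n) := by
  have hK : IsClosed (⋃ j ≤ n, C j) := by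
    have : (⋃ j ≤ n, C j) = ⋃ j : {j // j ≤ n}, C j := by
      ext f; simp
    rw [this]
    exact isClosed_iUnion_of_finite (fun j => hC j.1)
  set S : Set ((ℕ → Bool) × (ℕ → Bool)) :=
    {p | p.2 ∈ (⋃ j ≤ n, C j) ∧ ∀ k, p.1 k = true → p.2 k = true} with hS
  have hSclosed : IsClosed S := by
    have h1 : IsClosed {p : (ℕ → Bool) × (ℕ → Bool) | p.2 ∈ (⋃ j ≤ n, C j)} :=
      hK.preimage continuous_snd
    have h2 : ∀ k, IsClosed {p : (ℕ → Bool) × (ℕ → Bool) | p.1 k = true → p.2 k = true} := by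
      intro k
      have hc : Continuous (fun p : (ℕ → Bool) × (ℕ → Bool) => (p.1 k, p.2 k)) :=
        ((continuous_apply k).comp continuous_fst).prodMk
          ((continuous_apply k).comp continuous_snd)
      exact (isClosed_discrete {q : Bool × Bool | q.1 = true → q.2 = true}).preimage hc
    have : S = {p : (ℕ → Bool) × (ℕ → Bool) | p.2 ∈ (⋃ j ≤ n, C j)} ∩
        ⋂ k, {p : (ℕ → Bool) × (ℕ → Bool) | p.1 k = true → p.2 k = true} := by
      ext p; simp [hS, Set.mem_iInter]
    rw [this]
    exact h1.inter (isClosed_iInter h2)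
  have hScompact : IsCompact S := hSclosed.isCompact
  have himg : Cl C n = Prod.fst '' S := by
    ext f
    constructor
    · rintro ⟨g, hg, hfg⟩; exact ⟨(f, g), ⟨hg, hfg⟩, rfl⟩
    · rintro ⟨⟨f', g⟩, ⟨hg, hfg⟩, rfl⟩; exact ⟨g, hg, hfg⟩
  rw [himg]
  exact (hScompact.image continuous_fst).isClosed

/-- truncation of a boolean sequence -/
def btrunc (m : ℕ) (f : ℕ → Bool) : ℕ → Bool := fun n => if n < m then f n else false

lemma btrunc_chi (m : ℕ) (A : Set ℕ) : btrunc m (chi A) = chi (A ∩ Set.Iio m) := by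
  funext n
  by_cases h : n < m <;> simp [btrunc, chi, h]

lemma tendsto_btrunc (f : ℕ → Bool) : Tendsto (fun m => btrunc m f) atTop (𝓝 f) := by
  rw [tendsto_pi_nhds]
  intro n
  refine tendsto_const_nhds.congr' ?_
  filter_upwards [eventually_ge_atTop (n + 1)] with m hm
  simp [btrunc, Nat.lt_of_succ_le hm]

lemma mem_of_btrunc {C : Set (ℕ → Bool)} (hC : IsClosed C) {f : ℕ → Bool}
    (h : ∀ m, btrunc m f ∈ C) : f ∈ C :=
  hC.mem_of_tendsto (tendsto_btrunc f) (Filter.Eventually.of_forall h)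

theorem stmt19 (I : Set (Set ℕ)) (hI : IsIdealOmega I)
    (hFσ : ∃ C : ℕ → Set (ℕ → Bool), (∀ n, IsClosed (C n)) ∧
      {f : ℕ → Bool | {n | f n = true} ∈ I} = ⋃ n, C n)
    (x : LInf) :
    (∀ η : ℝ, IClusterPoint I (fun n => x n) η → ILimitPoint I (fun n => x n) η) ∧
    {η : ℝ | ILimitPoint I (fun n => x n) η} =
      {η : ℝ | IClusterPoint I (fun n => x n) η} := by
  obtain ⟨hher, hun, -, hfin⟩ := hI
  obtain ⟨C, hCcl, hCI⟩ := hFσ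
  -- membership in I characterized by chi
  have hmemI : ∀ A : Set ℕ, A ∈ I ↔ chi A ∈ ⋃ n, C n := by
    intro A
    rw [← hCI]
    simp [chi_supp]
  -- Cl C n ⊆ I (as a collection of chi's)
  have hClI : ∀ (n : ℕ) (A : Set ℕ), chi A ∈ Cl C n → A ∈ I := by
    rintro n A ⟨g, hg, hfg⟩
    simp only [Set.mem_iUnion] at hg
    obtain ⟨j, _, hgj⟩ := hg
    have hgI : {k | g k = true} ∈ I := by
      have : g ∈ ⋃ n, C n := Set.mem_iUnion.2 ⟨j, hgj⟩
      rw [← hCI] at this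
      exact this
    refine hher _ A hgI ?_
    intro k hk
    have : chi A k = true := by simp [chi, hk]
    exact hfg k this
  -- main implication: cluster point → limit point
  have main : ∀ η : ℝ, IClusterPoint I (fun n => x n) η → ILimitPoint I (fun n => x n) η := by
    intro η hcl
    set A : ℕ → Set ℕ := fun k => {n | |x n - η| ≤ 1 / (k + 1)} with hA
    have hAnotI : ∀ k, A k ∉ I := by
      intro k
      refine hcl (1 / (k + 1)) ?_
      positivity
    -- key step: tails of A k escape Cl C k by finite truncations
    have exm : ∀ k p : ℕ, ∃ m : ℕ, p < m ∧ chi (A k ∩ Set.Ico p m) ∉ Cl C k := by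
      intro k p
      have htail : A k ∩ Set.Ici p ∉ I := by
        intro h
        refine hAnotI k (hher _ _ (hun _ _ h (hfin (Set.Iio p) (Set.finite_Iio p))) ?_)
        intro n hn
        by_cases hp : p ≤ n
        · exact Or.inl ⟨hn, hp⟩
        · exact Or.inr (by simpa using Nat.lt_of_not_le hp)
      have hnotCl : chi (A k ∩ Set.Ici p) ∉ Cl C k := fun h => htail (hClI k _ h)
      have : ¬ ∀ m, btrunc m (chi (A k ∩ Set.Ici p)) ∈ Cl C k := by
        intro h
        exact hnotCl (mem_of_btrunc (Cl_isClosed C hCcl k) h)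
      push_neg at this
      obtain ⟨m, hm⟩ := this
      rw [btrunc_chi] at hm
      refine ⟨max m (p + 1), lt_of_lt_of_le (Nat.lt_succ_self p) (le_max_right _ _), ?_⟩
      intro habs
      refine hm (Cl_hered C ?_ habs)
      rintro n ⟨⟨hnA, hnp⟩, hnm⟩
      exact ⟨hnA, hnp, lt_of_lt_of_le hnm (le_max_left _ _)⟩
    -- recursive construction of cut points
    set p : ℕ → ℕ := fun k => Nat.rec 0 (fun k pk => (exm k pk).choose) k with hp
    have hpsucc : ∀ k, p (k + 1) = (exm k (p k)).choose := fun k => rfl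
    have hplt : ∀ k, p k < p (k + 1) := fun k => (exm k (p k)).choose_spec.1
    have hpmono : StrictMono p := strictMono_nat_of_lt_succ hplt
    set F : ℕ → Set ℕ := fun k => A k ∩ Set.Ico (p k) (p (k + 1)) with hF
    have hFnot : ∀ k, chi (F k) ∉ Cl C k := fun k => (exm k (p k)).choose_spec.2
    set B : Set ℕ := ⋃ k, F k with hB
    have hBnotI : B ∉ I := by
      intro h
      rw [hmemI] at h
      obtain ⟨n, hn⟩ := Set.mem_iUnion.1 h
      exact hFnot n (Cl_hered C (Set.subset_iUnion F n) (mem_Cl_self C le_rfl hn))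
    have hBinf : B.Infinite := by
      intro hfin'
      exact hBnotI (hfin B hfin')
    have hBinf' : {n | n ∈ B}.Infinite := hBinf
    set a : ℕ → ℕ := Nat.nth (· ∈ B) with ha
    have hamono : StrictMono a := Nat.nth_strictMono hBinf'
    have harange : Set.range a = B := Nat.range_nth_of_infinite hBinf'
    refine ⟨a, hamono, by rw [harange]; exact hBnotI, ?_⟩
    rw [Metric.tendsto_atTop]
    intro ε hε
    obtain ⟨k, hk⟩ := exists_nat_one_div_lt hε
    refine ⟨p (k + 1), fun n hn => ?_⟩
    have haB : a n ∈ B := by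
      rw [← harange]; exact Set.mem_range_self n
    obtain ⟨j, hj⟩ := Set.mem_iUnion.1 haB
    obtain ⟨hjA, hjlo, hjhi⟩ := hj
    have hkj : k ≤ j := by
      by_contra hlt
      push_neg at hlt
      have h1 : p (j + 1) ≤ p (k + 1) := hpmono.monotone (Nat.succ_le_succ hlt.le)
      have h2 : p (k + 1) ≤ a n := le_trans hn (hamono.le_apply)
      omega
    have hbound : |x (a n) - η| ≤ 1 / (j + 1) := hjA
    have : (1 : ℝ) / (j + 1) ≤ 1 / (k + 1) := by
      apply one_div_le_one_div_of_le
      · positivity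
      · exact_mod_cast Nat.succ_le_succ hkj
    rw [Real.dist_eq]
    exact lt_of_le_of_lt (le_trans hbound this) hk
  refine ⟨main, ?_⟩
  ext η
  simp only [Set.mem_setOf_eq]
  constructor
  · rintro ⟨a, hamono, hrange, hconv⟩
    intro ε hε hS
    apply hrange
    rw [Metric.tendsto_atTop] at hconv
    obtain ⟨N, hN⟩ := hconv ε hε
    have hsub : Set.range a ⊆ {n | |x n - η| ≤ ε} ∪ (a '' Set.Iio N) := by
      rintro m ⟨n, rfl⟩
      by_cases hn : N ≤ n
      · left
        have := hN n hn
        rw [Real.dist_eq] at this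
        exact this.le
      · right
        exact ⟨n, Nat.lt_of_not_le hn, rfl⟩
    exact hher _ _ (hun _ _ hS (hfin _ ((Set.finite_Iio N).image a))) hsub
  · exact main η
end
end
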